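/- arXiv:2010.08812 — 2 statements merged into one kernel-verified Lean document; each statement's English description precedes it below -/
import Mathlib

section
/- A subset A of a perfect Polish space X is countably perfectly meager in X if and only if A is an s₀-set and for every sequence {K_n : n ∈ ℕ} of pairwise disjoint Cantor sets in X, each disjoint from A, there exist closed sets F_n in X with A ⊆ ⋃_n F_n and K_m ⊄ F_n for all m, n. -/
open Set

/-- An `Fσ` set: a countable union of closed sets. -/
def IsFsigma {X : Type*} [TopologicalSpace X] (F : Set X) : Prop :=
  ∃ s : ℕ → Set X, (∀ n, IsClosed (s n)) ∧ F = ⋃ n, s n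

/-- A perfect set in the classical sense: nonempty, closed, without isolated points. -/
def PerfectSet {X : Type*} [TopologicalSpace X] (P : Set X) : Prop :=
  Perfect P ∧ P.Nonempty

/-- A Cantor set: a subset homeomorphic to the Cantor space `2^ℕ`
(hence nonempty and compact). -/
def IsCantorSet {X : Type*} [TopologicalSpace X] (K : Set X) : Prop :=
  Nonempty ((ℕ → Bool) ≃ₜ K)

/-- `F` is meager relative to the subspace `P`. -/
def MeagerIn {X : Type*} [TopologicalSpace X] (F P : Set X) : Prop :=
  IsMeagre ((↑) ⁻¹' F : Set P)

/-- `A` is countably perfectly meager in `X`. -/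
def CPM {X : Type*} [TopologicalSpace X] (A : Set X) : Prop :=
  ∀ P : ℕ → Set X, (∀ n, PerfectSet (P n)) →
    ∃ F : Set X, IsFsigma F ∧ A ⊆ F ∧ ∀ n, MeagerIn F (P n)

/-!
(→) Applied to a single perfect set `P`, or to the Cantor sets `K n` themselves, `CPM` gives an
`Fσ` cover of `A` that is meager in `P`. Its complement in `P` is comeager, hence uncountable, and
Borel, so it contains a Cantor set; and no `K m` lies in a closed piece of the cover, because `K m`
is not meager in itself.

(←) Fix a countable basis `b` and countable sets `T n ⊆ P n` dense in `P n`. Recursively choose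
pairwise disjoint Cantor sets `D j` missing `A` and `⋃ n, T n`, the `j`-th one inside `b i ∩ P n`
for `(n, i) = j.unpair` whenever that set is nonempty. This is possible because the earlier `D`'s
miss `T n`, so they cannot exhaust `b i ∩ P n`, and the s₀ property yields a Cantor set missing `A`
in what is left, which then is shrunk to miss the countable set `⋃ n, T n`. A closed cover `F k` of
`A` with no `D j ⊆ F k` has every `F k ∩ P n` nowhere dense in `P n`.
-/

open Filter Topology TopologicalSpace Function

section Perfect

variable {X Y : Type*} [TopologicalSpace X] [TopologicalSpace Y]

instance Pi.perfectSpace {ι : Type*} {E : ι → Type*} [∀ i, TopologicalSpace (E i)] [Infinite ι]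
    [∀ i, Nontrivial (E i)] : PerfectSpace (∀ i, E i) := by
  classical
  refine perfectSpace_iff_forall_not_isolated.2 fun p => ?_
  rw [← mem_closure_iff_nhdsWithin_neBot]
  choose q hq using fun i => exists_ne (p i)
  have hlim : Tendsto (fun i => update p i (q i)) cofinite (𝓝 p) :=
    tendsto_pi_nhds.2 fun j => tendsto_const_nhds.congr'
      ((eventually_cofinite_ne j).mono fun i hi => (update_of_ne (Ne.symm hi) _ _).symm)
  refine mem_closure_of_tendsto hlim (Eventually.of_forall fun i h => hq i ?_)
  simpa using congrFun h i

lemma Preperfect.perfectSpace_coe {P : Set X} (hP : Preperfect P) : PerfectSpace P := by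
  refine perfectSpace_iff_forall_not_isolated.2 fun a => ?_
  rw [← mem_closure_iff_nhdsWithin_neBot, closure_subtype, image_val_compl, image_singleton,
    mem_closure_iff_nhdsWithin_neBot, ← accPt_principal_iff_nhdsWithin]
  exact hP a a.2

lemma preperfect_range [PerfectSpace Y] {f : Y → X} (hf : Continuous f) (hinj : Injective f) :
    Preperfect (range f) := by
  rintro _ ⟨y, rfl⟩
  have hy : AccPt y ⊤ := by simpa [AccPt] using PerfectSpace.not_isolated y
  simpa using hy.map hf.continuousAt hinj

lemma Set.Countable.isMeagre [T1Space X] [PerfectSpace X] {s : Set X} (hs : s.Countable) :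
    IsMeagre s := by
  rw [← biUnion_of_singleton s]
  exact isMeagre_biUnion hs fun x _ =>
    ((isClosed_singleton.isNowhereDense_iff).2 (interior_singleton x)).isMeagre

end Perfect

section Cantor

variable {X : Type*} [TopologicalSpace X] {K : Set X}

lemma IsCantorSet.exists_range_eq (hK : IsCantorSet K) :
    ∃ f : (ℕ → Bool) → X, Continuous f ∧ Injective f ∧ range f = K := by
  obtain ⟨e⟩ := hK
  exact ⟨(↑) ∘ e, continuous_subtype_val.comp e.continuous,
    Subtype.val_injective.comp e.injective, by simp [range_comp]⟩

lemma isCantorSet_range [T2Space X] {f : (ℕ → Bool) → X} (hf : Continuous f)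
    (hinj : Injective f) : IsCantorSet (range f) :=
  ⟨(hf.rangeFactorization).homeoOfEquivCompactToT2
    (f := Equiv.ofInjective f hinj)⟩

lemma IsCantorSet.not_countable (hK : IsCantorSet K) : ¬ K.Countable := by
  obtain ⟨f, -, hinj, rfl⟩ := hK.exists_range_eq
  have : Uncountable (ℕ → Bool) := by
    rw [← Cardinal.aleph0_lt_mk_iff]
    simpa using Cardinal.aleph0_lt_continuum
  rw [← countable_coe_iff, ← (Equiv.ofInjective f hinj).countable_iff]
  exact not_countable

lemma IsCantorSet.perfectSet [T2Space X] (hK : IsCantorSet K) : PerfectSet K := by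
  obtain ⟨f, hf, hinj, rfl⟩ := hK.exists_range_eq
  exact ⟨⟨(isCompact_range hf).isClosed, preperfect_range hf hinj⟩, range_nonempty f⟩

end Cantor

section Polish

variable {X : Type*} [TopologicalSpace X] [PolishSpace X]

lemma MeasurableSet.exists_isCantorSet_subset [MeasurableSpace X] [BorelSpace X] {s : Set X}
    (hs : MeasurableSet s) (hunc : ¬ s.Countable) : ∃ K ⊆ s, IsCantorSet K := by
  obtain ⟨f, hfs, hf, hinj⟩ : ∃ f : (ℕ → Bool) → X, range f ⊆ s ∧ Continuous f ∧ Injective f := by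
    obtain ⟨t', ht', ht'polish, hs', -⟩ := hs.isClopenable
    obtain ⟨f, hfs, hf, hinj⟩ :=
      @IsClosed.exists_nat_bool_injection_of_not_countable X t' ht'polish s hs' hunc
    exact ⟨f, hfs, continuous_le_rng ht' hf, hinj⟩
  exact ⟨range f, hfs, isCantorSet_range hf hinj⟩

lemma IsCantorSet.exists_isCantorSet_subset_diff {K S : Set X} (hK : IsCantorSet K)
    (hS : S.Countable) : ∃ K' ⊆ K \ S, IsCantorSet K' := by
  borelize X
  refine (hK.perfectSet.1.closed.measurableSet.diff hS.measurableSet).exists_isCantorSet_subset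
    fun hc => hK.not_countable ?_
  exact (hc.union hS).mono (subset_sdiff_union K S)

lemma PerfectSet.not_countable_diff_of_meagerIn {P F : Set X} (hP : PerfectSet P)
    (hF : MeagerIn F P) : ¬ (P \ F).Countable := by
  intro hc
  have : PolishSpace P := hP.1.closed.polishSpace
  have : PerfectSpace P := hP.1.acc.perfectSpace_coe
  have : Nonempty P := hP.2.to_subtype
  refine not_isMeagre_of_isOpen isOpen_univ univ_nonempty
    ((hF.union (hc.preimage Subtype.val_injective).isMeagre).mono fun x _ => ?_)
  by_cases hx : (x : X) ∈ F
  exacts [Or.inl hx, Or.inr ⟨x.2, hx⟩]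

lemma PerfectSet.not_subset_of_meagerIn {P F : Set X} (hP : PerfectSet P) (hF : MeagerIn F P) :
    ¬ P ⊆ F := fun h => hP.not_countable_diff_of_meagerIn hF (by simp [sdiff_eq_empty.2 h])

end Polish

lemma isNowhereDense_preimage_val {X : Type*} [TopologicalSpace X] {P F : Set X}
    (hF : IsClosed F) (h : ∀ U, IsOpen U → (U ∩ P).Nonempty → ¬ U ∩ P ⊆ F) :
    IsNowhereDense ((↑) ⁻¹' F : Set P) := by
  set s : Set P := (↑) ⁻¹' F
  rw [(hF.preimage continuous_subtype_val).isNowhereDense_iff, eq_empty_iff_forall_notMem]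
  intro a ha
  obtain ⟨U, hU, hUs⟩ := isOpen_induced_iff.1 (isOpen_interior (s := s))
  have hmem (x : P) : (x : X) ∈ U ↔ x ∈ interior s := Set.ext_iff.1 hUs x
  exact h U hU ⟨a, (hmem a).2 ha, a.2⟩ fun x hx =>
    interior_subset (s := s) ((hmem ⟨x, hx.2⟩).1 hx.1)

lemma exists_pairwise_disjoint_of_forall_exists {α : Type*} (Good : Set α → Prop)
    (Q : ℕ → Set α → Prop) (hempty : Good ∅)
    (hstep : ∀ j G, Good G → ∃ D, Q j D ∧ Disjoint D G ∧ Good (G ∪ D)) :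
    ∃ D : ℕ → Set α, (∀ j, Q j (D j)) ∧ Pairwise (Disjoint on D) := by
  choose next hQ hdisj hgood using hstep
  let G : ℕ → {G // Good G} := fun j =>
    Nat.rec ⟨∅, hempty⟩ (fun j G => ⟨G.1 ∪ next j G.1 G.2, hgood j G.1 G.2⟩) j
  have hmono : Monotone fun j => (G j).1 :=
    monotone_nat_of_le_succ fun j => subset_union_left
  refine ⟨fun j => next j (G j).1 (G j).2, fun j => hQ _ _ _, (pairwise_disjoint_on _).2 ?_⟩
  intro i j hij
  exact (hdisj _ _ _).symm.mono_left (subset_union_right.trans (hmono hij))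

def IsSZeroSet {X : Type*} [TopologicalSpace X] (A : Set X) : Prop :=
  ∀ P : Set X, PerfectSet P → ∃ K : Set X, K ⊆ P ∧ IsCantorSet K ∧ K ∩ A = ∅

section CPM

variable {X : Type*} [TopologicalSpace X] [PolishSpace X] {A : Set X}

lemma CPM.isSZeroSet (hA : CPM A) : IsSZeroSet A := by
  intro P hP
  obtain ⟨_, ⟨s, hs, rfl⟩, hAF, hmeagre⟩ := hA (fun _ => P) fun _ => hP
  borelize X
  have hmeas : MeasurableSet (P \ ⋃ n, s n) :=
    hP.1.closed.measurableSet.diff (.iUnion fun n => (hs n).measurableSet)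
  obtain ⟨K, hKP, hK⟩ :=
    hmeas.exists_isCantorSet_subset (hP.not_countable_diff_of_meagerIn (hmeagre 0))
  exact ⟨K, fun x hx => (hKP hx).1, hK,
    eq_empty_of_forall_notMem fun x hx => (hKP hx.1).2 (hAF hx.2)⟩

lemma CPM.exists_closed_cover (hA : CPM A) {K : ℕ → Set X} (hK : ∀ n, IsCantorSet (K n)) :
    ∃ F : ℕ → Set X, (∀ n, IsClosed (F n)) ∧ A ⊆ ⋃ n, F n ∧ ∀ m n, ¬ K m ⊆ F n := by
  obtain ⟨_, ⟨F, hF, rfl⟩, hAF, hmeagre⟩ := hA K fun n => (hK n).perfectSet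
  exact ⟨F, hF, hAF, fun m n hsub =>
    (hK m).perfectSet.not_subset_of_meagerIn (hmeagre m) (hsub.trans (subset_iUnion F n))⟩

lemma IsSZeroSet.exists_isCantorSet_subset_inter {P S G U : Set X} (hA : IsSZeroSet A)
    (hP : Perfect P) (hS : S.Countable) (hPS : P ⊆ closure (S ∩ P)) (hG : IsClosed G)
    (hGS : Disjoint G S) (hU : IsOpen U) (hUP : (U ∩ P).Nonempty) :
    ∃ D ⊆ U ∩ P, IsCantorSet D ∧ Disjoint D A ∧ Disjoint D S ∧ Disjoint D G := by
  obtain ⟨y, hyU, hyS, hyP⟩ : (U ∩ (S ∩ P)).Nonempty := by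
    obtain ⟨x, hxU, hxP⟩ := hUP
    exact mem_closure_iff.1 (hPS hxP) U hU hxU
  obtain ⟨N, hN, hNc, hNsub⟩ := exists_mem_nhds_isClosed_subset
    ((hU.sdiff hG).mem_nhds ⟨hyU, disjoint_right.1 hGS hyS⟩)
  obtain ⟨C, hCQ, hC, hCA⟩ :=
    hA _ (hP.closure_nhds_inter y hyP (mem_interior_iff_mem_nhds.2 hN) isOpen_interior)
  obtain ⟨D, hDC, hD⟩ := hC.exists_isCantorSet_subset_diff hS
  have hDN : D ⊆ N ∩ P := fun x hx => closure_minimal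
    (inter_subset_inter_left _ interior_subset) (hNc.inter hP.closed) (hCQ (hDC hx).1)
  refine ⟨D, fun x hx => ⟨(hNsub (hDN hx).1).1, (hDN hx).2⟩, hD, ?_,
    disjoint_left.2 fun x hx => (hDC hx).2, disjoint_left.2 fun x hx => (hNsub (hDN hx).1).2⟩
  exact (disjoint_iff_inter_eq_empty.2 hCA).mono_left fun x hx => (hDC hx).1

lemma CPM.of_isSZeroSet (h1 : IsSZeroSet A)
    (h2 : ∀ K : ℕ → Set X, (∀ n, IsCantorSet (K n)) → Pairwise (Disjoint on K) →
      (∀ n, Disjoint (K n) A) →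
      ∃ F : ℕ → Set X, (∀ n, IsClosed (F n)) ∧ A ⊆ ⋃ n, F n ∧ ∀ m n, ¬ K m ⊆ F n) :
    CPM A := by
  intro P hP
  obtain ⟨b, hb⟩ := exists_seq_basis X
  choose T hTP hTc hPT using fun n =>
    (IsSeparable.of_separableSpace (P n)).exists_countable_dense_subset
  have hSc : (⋃ n, T n).Countable := countable_iUnion hTc
  have hPS n : P n ⊆ closure ((⋃ n, T n) ∩ P n) :=
    (hPT n).trans (closure_mono (subset_inter (subset_iUnion T n) (hTP n)))
  obtain ⟨D, hD, hdisj⟩ := exists_pairwise_disjoint_of_forall_exists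
    (fun G => IsClosed G ∧ Disjoint G (⋃ n, T n))
    (fun j D => IsCantorSet D ∧ Disjoint D A ∧
      ((b j.unpair.2 ∩ P j.unpair.1).Nonempty → D ⊆ b j.unpair.2 ∩ P j.unpair.1))
    ⟨isClosed_empty, empty_disjoint _⟩ <| by
      rintro j G ⟨hG, hGS⟩
      obtain ⟨U, hU, hUP, hUb⟩ : ∃ U, IsOpen U ∧ (U ∩ P j.unpair.1).Nonempty ∧
          ((b j.unpair.2 ∩ P j.unpair.1).Nonempty → U = b j.unpair.2) := by
        by_cases hne : (b j.unpair.2 ∩ P j.unpair.1).Nonempty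
        · exact ⟨_, hb.isOpen (mem_range_self _), hne, fun _ => rfl⟩
        · exact ⟨univ, isOpen_univ, by simpa using (hP _).2, fun h => absurd h hne⟩
      obtain ⟨D, hDU, hD, hDA, hDS, hDG⟩ :=
        h1.exists_isCantorSet_subset_inter (hP _).1 hSc (hPS _) hG hGS hU hUP
      exact ⟨D, ⟨hD, hDA, fun h => hUb h ▸ hDU⟩, hDG, hG.union hD.perfectSet.1.closed,
        disjoint_union_left.2 ⟨hGS, hDS⟩⟩
  obtain ⟨F, hF, hAF, hDF⟩ := h2 D (fun j => (hD j).1) hdisj fun j => (hD j).2.1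
  refine ⟨⋃ k, F k, ⟨F, hF, rfl⟩, hAF, fun n => ?_⟩
  rw [MeagerIn, preimage_iUnion]
  refine isMeagre_iUnion fun k => (isNowhereDense_preimage_val (hF k) ?_).isMeagre
  rintro U hU ⟨x, hxU, hxP⟩ hUF
  obtain ⟨_, ⟨i, rfl⟩, hxi, hiU⟩ := hb.exists_subset_of_mem_open hxU hU
  have hDi := (hD (Nat.pair n i)).2.2
  rw [Nat.unpair_pair] at hDi
  exact hDF _ k ((hDi ⟨x, hxi, hxP⟩).trans ((inter_subset_inter_left _ hiU).trans hUF))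

end CPM

theorem stmt3_general {X : Type*} [TopologicalSpace X] [PolishSpace X] (A : Set X) :
    CPM A ↔
      ((∀ P : Set X, PerfectSet P → ∃ K : Set X, K ⊆ P ∧ IsCantorSet K ∧ K ∩ A = ∅) ∧
        ∀ K : ℕ → Set X, (∀ n, IsCantorSet (K n)) → Pairwise (Function.onFun Disjoint K) →
          (∀ n, Disjoint (K n) A) →
          ∃ F : ℕ → Set X, (∀ n, IsClosed (F n)) ∧ A ⊆ ⋃ n, F n ∧
            ∀ m n, ¬ K m ⊆ F n) :=
  ⟨fun hA => ⟨hA.isSZeroSet, fun _ hK _ _ => hA.exists_closed_cover hK⟩,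
    fun h => CPM.of_isSZeroSet h.1 h.2⟩

theorem stmt3 {X : Type*} [TopologicalSpace X] [PolishSpace X]
    (hX : Perfect (Set.univ : Set X)) (A : Set X) :
    CPM A ↔
      ((∀ P : Set X, PerfectSet P → ∃ K : Set X, K ⊆ P ∧ IsCantorSet K ∧ K ∩ A = ∅) ∧
        ∀ K : ℕ → Set X, (∀ n, IsCantorSet (K n)) → Pairwise (Function.onFun Disjoint K) →
          (∀ n, Disjoint (K n) A) →
          ∃ F : ℕ → Set X, (∀ n, IsClosed (F n)) ∧ A ⊆ ⋃ n, F n ∧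
            ∀ m n, ¬ K m ⊆ F n) :=
  stmt3_general A
end

section
/- A set A ⊆ 2^ℕ is countably perfectly meager in 2^ℕ if and only if for every perfect subset P of 2^ℕ there exists an F_σ-set F in 2^ℕ such that A ⊆ F and F ∩ (P + q) is meager in P + q for every q ∈ ℚ, where ℚ denotes the set of eventually zero binary sequences and + is coordinatewise addition mod 2. -/
open Set

/-- Coordinatewise addition mod 2 on `2^ℕ`. -/
def cAdd (x y : ℕ → Bool) : ℕ → Bool := fun n => xor (x n) (y n)

/-- The translate `P + q` of a set `P ⊆ 2^ℕ`. -/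
def cTranslate (P : Set (ℕ → Bool)) (t : ℕ → Bool) : Set (ℕ → Bool) :=
  (fun x => cAdd x t) '' P

/-- Eventually zero binary sequences. -/
def EventuallyZero (q : ℕ → Bool) : Prop := ∀ᶠ n in Filter.atTop, q n = false

/-!
The forward direction holds because the rational translates of a perfect set form a countable
family of perfect sets. For the converse, given perfect sets `P n`, enumerate the closures `Q m` of
their nonempty basic portions and glue rational translates of pieces of them into one perfect set
`P* = {0} ∪ ⋃ R m`: `R m` is a translate of a portion of `Q m` lying in the clopen set of sequences
whose first `1` is at position `m`. These clopen sets are disjoint and accumulate only at `0`, so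
`P*` is perfect and some translate `P* + q` has a nonempty relatively open piece inside `Q m`. If a
closed piece of an `F_σ` set `F` contained a portion of some `P n`, then `F` would contain a
nonempty open subset of the compact set `P* + q`, so by Baire's theorem `F` is not meager there.
-/

open Topology PiNat Function

section Cylinders

variable {E : ℕ → Type*} [∀ n, TopologicalSpace (E n)] [∀ n, DiscreteTopology (E n)]

lemma PiNat.isClosed_cylinder (x : ∀ n, E n) (n : ℕ) : IsClosed (cylinder x n) := by
  rw [cylinder_eq_pi]
  exact isClosed_set_pi fun _ _ => isClosed_discrete _

lemma PiNat.exists_cylinder_subset_of_mem_nhds {x : ∀ n, E n} {U : Set (∀ n, E n)}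
    (hU : U ∈ 𝓝 x) : ∃ n, cylinder x n ⊆ U := by
  obtain ⟨_, ⟨z, n, rfl⟩, hx, hsub⟩ := (isTopologicalBasis_cylinders E).mem_nhds_iff.1 hU
  exact ⟨n, mem_cylinder_iff_eq.1 hx ▸ hsub⟩

end Cylinders

lemma Perfect.inter_isClopen {X : Type*} [TopologicalSpace X] {C U : Set X} (hC : Perfect C)
    (hU : IsClopen U) : Perfect (C ∩ U) :=
  ⟨hC.closed.inter hU.isClosed, inter_comm U C ▸ hC.acc.open_inter hU.isOpen⟩

lemma Perfect.image_homeomorph {X Y : Type*} [TopologicalSpace X] [TopologicalSpace Y]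
    {C : Set X} (hC : Perfect C) (h : X ≃ₜ Y) : Perfect (h '' C) := by
  refine ⟨h.isClosedMap _ hC.closed, ?_⟩
  rintro _ ⟨x, hx, rfl⟩
  simpa using (hC.acc x hx).map h.continuous.continuousAt h.injective

lemma cAdd_cAdd_self (x q : ℕ → Bool) : cAdd (cAdd x q) q = x := by
  funext n
  simp [cAdd]

lemma continuous_cAdd_right (q : ℕ → Bool) : Continuous (cAdd · q) :=
  continuous_pi fun n =>
    (continuous_of_discreteTopology (f := fun b : Bool => xor b (q n))).comp (continuous_apply n)

def cAddHomeomorph (q : ℕ → Bool) : (ℕ → Bool) ≃ₜ (ℕ → Bool) where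
  toEquiv := Function.Involutive.toPerm _ (cAdd_cAdd_self · q)
  continuous_toFun := continuous_cAdd_right q
  continuous_invFun := continuous_cAdd_right q

lemma mem_cTranslate {P : Set (ℕ → Bool)} {q y : ℕ → Bool} :
    y ∈ cTranslate P q ↔ cAdd y q ∈ P :=
  ⟨by rintro ⟨z, hz, rfl⟩; rwa [cAdd_cAdd_self], fun h => ⟨_, h, cAdd_cAdd_self y q⟩⟩

lemma cTranslate_cTranslate (P : Set (ℕ → Bool)) (q : ℕ → Bool) :
    cTranslate (cTranslate P q) q = P := by
  ext y
  rw [mem_cTranslate, mem_cTranslate, cAdd_cAdd_self]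

lemma cTranslate_inter (P P' : Set (ℕ → Bool)) (q : ℕ → Bool) :
    cTranslate (P ∩ P') q = cTranslate P q ∩ cTranslate P' q :=
  image_inter (cAddHomeomorph q).injective

lemma IsOpen.cTranslate {U : Set (ℕ → Bool)} (hU : IsOpen U) (q : ℕ → Bool) :
    IsOpen (cTranslate U q) :=
  (cAddHomeomorph q).isOpenMap U hU

lemma PerfectSet.cTranslate {P : Set (ℕ → Bool)} (hP : PerfectSet P) (q : ℕ → Bool) :
    PerfectSet (cTranslate P q) :=
  ⟨hP.1.image_homeomorph (cAddHomeomorph q), hP.2.image _⟩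

lemma exists_eventuallyZero_cTranslate_cylinder (x y : ℕ → Bool) (n : ℕ) :
    ∃ q, EventuallyZero q ∧ cTranslate (cylinder x n) q = cylinder y n := by
  refine ⟨fun k => if k < n then xor (x k) (y k) else false,
    Filter.eventually_atTop.2 ⟨n, fun k hk => if_neg (not_lt.2 hk)⟩, ?_⟩
  ext z
  simp only [mem_cTranslate, mem_cylinder_iff, cAdd]
  refine forall₂_congr fun i hi => ?_
  cases z i <;> cases x i <;> cases y i <;> simp [hi]

lemma countable_setOf_eventuallyZero : {q : ℕ → Bool | EventuallyZero q}.Countable := by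
  refine (countable_range fun (s : Finset ℕ) n => decide (n ∈ s)).mono fun q hq => ?_
  obtain ⟨N, hN⟩ := Filter.eventually_atTop.1 hq
  refine ⟨(Finset.range N).filter (q · = true), funext fun n => ?_⟩
  by_cases hn : n < N
  · simp [hn]
  · simp [hn, hN n (not_lt.1 hn)]

lemma CPM.exists_isFsigma_meagerIn_cTranslate {A : Set (ℕ → Bool)} (hA : CPM A)
    {P : Set (ℕ → Bool)} (hP : PerfectSet P) :
    ∃ F, IsFsigma F ∧ A ⊆ F ∧ ∀ q, EventuallyZero q → MeagerIn F (cTranslate P q) := by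
  obtain ⟨e, he⟩ := countable_setOf_eventuallyZero.exists_eq_range
    ⟨fun _ => false, Filter.Eventually.of_forall fun _ => rfl⟩
  obtain ⟨F, hF, hAF, hPF⟩ := hA (fun n => cTranslate P (e n)) fun n => hP.cTranslate _
  refine ⟨F, hF, hAF, fun q hq => ?_⟩
  obtain ⟨n, rfl⟩ : q ∈ range e := he ▸ hq
  exact hPF n

def firstTrueAt (m : ℕ) : Set (ℕ → Bool) := cylinder (fun k => decide (k = m)) (m + 1)

lemma mem_firstTrueAt {y : ℕ → Bool} {m : ℕ} :
    y ∈ firstTrueAt m ↔ y m = true ∧ ∀ k < m, y k = false := by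
  simp only [firstTrueAt, mem_cylinder_iff, Nat.lt_succ_iff_lt_or_eq, or_imp, forall_and]
  simp +contextual [Nat.ne_of_lt, and_comm]

lemma isOpen_firstTrueAt (m : ℕ) : IsOpen (firstTrueAt m) := isOpen_cylinder _ _ _

lemma pairwise_disjoint_firstTrueAt : Pairwise (Disjoint on firstTrueAt) := by
  intro m m' hne
  wlog hlt : m < m' generalizing m m'
  · exact (this hne.symm (lt_of_le_of_ne (not_lt.1 hlt) hne.symm)).symm
  refine disjoint_left.2 fun y hy hy' => ?_
  simpa [(mem_firstTrueAt.1 hy).1] using (mem_firstTrueAt.1 hy').2 m hlt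

lemma false_notMem_firstTrueAt (m : ℕ) : (fun _ => false) ∉ firstTrueAt m := by
  simp [mem_firstTrueAt]

lemma firstTrueAt_subset_cylinder (m : ℕ) : firstTrueAt m ⊆ cylinder (fun _ => false) m :=
  fun _ hy => (mem_firstTrueAt.1 hy).2

lemma exists_mem_firstTrueAt {y : ℕ → Bool} (hy : y ≠ fun _ => false) :
    ∃ m, y ∈ firstTrueAt m := by
  classical
  have h : ∃ k, y k = true := by
    by_contra! h
    exact hy (funext fun k => by simpa using h k)
  exact ⟨Nat.find h,
    mem_firstTrueAt.2 ⟨Nat.find_spec h, fun k hk => by simpa using Nat.find_min h hk⟩⟩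

section Comb

variable {R : ℕ → Set (ℕ → Bool)}

lemma insert_iUnion_inter_firstTrueAt (hRD : ∀ m, R m ⊆ firstTrueAt m) (m : ℕ) :
    insert (fun _ => false) (⋃ k, R k) ∩ firstTrueAt m = R m := by
  ext y
  constructor
  · rintro ⟨rfl | hy, hym⟩
    · exact absurd hym (false_notMem_firstTrueAt m)
    · obtain ⟨k, hk⟩ := mem_iUnion.1 hy
      obtain rfl : k = m := by
        by_contra hne
        exact disjoint_left.1 (pairwise_disjoint_firstTrueAt hne) (hRD k hk) hym
      exact hk
  · exact fun hy => ⟨mem_insert_of_mem _ (mem_iUnion_of_mem m hy), hRD m hy⟩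

lemma isClosed_insert_iUnion (hRD : ∀ m, R m ⊆ firstTrueAt m) (hR : ∀ m, IsClosed (R m)) :
    IsClosed (insert (fun _ => false) (⋃ m, R m)) := by
  refine isOpen_compl_iff.1 (isOpen_iff_forall_mem_open.2 fun y hy => ?_)
  obtain ⟨m, hm⟩ := exists_mem_firstTrueAt fun h => hy (h ▸ mem_insert _ _)
  refine ⟨firstTrueAt m \ R m, fun z hz hzP => hz.2 ?_, (isOpen_firstTrueAt m).sdiff (hR m),
    hm, fun hyR => hy (mem_insert_of_mem _ (mem_iUnion_of_mem m hyR))⟩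
  rw [← insert_iUnion_inter_firstTrueAt hRD m]
  exact ⟨hzP, hz.1⟩

lemma preperfect_insert_iUnion (hRD : ∀ m, R m ⊆ firstTrueAt m) (hR : ∀ m, Preperfect (R m))
    (hne : ∀ m, (R m).Nonempty) : Preperfect (insert (fun _ => false) (⋃ m, R m)) := by
  rw [preperfect_iff_nhds]
  rintro y (rfl | hy) U hU
  · obtain ⟨N, hN⟩ := exists_cylinder_subset_of_mem_nhds hU
    obtain ⟨z, hz⟩ := hne N
    exact ⟨z, ⟨hN (firstTrueAt_subset_cylinder N (hRD N hz)),
      mem_insert_of_mem _ (mem_iUnion_of_mem N hz)⟩,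
      fun h => false_notMem_firstTrueAt N (h ▸ hRD N hz)⟩
  · obtain ⟨m, hm⟩ := mem_iUnion.1 hy
    obtain ⟨z, hz, hzy⟩ := preperfect_iff_nhds.1 (hR m) y hm U hU
    exact ⟨z, ⟨hz.1, mem_insert_of_mem _ (mem_iUnion_of_mem m hz.2)⟩, hzy⟩

end Comb

theorem exists_perfectSet_translate_inter_isOpen_subset (Q : ℕ → Set (ℕ → Bool))
    (hQ : ∀ m, PerfectSet (Q m)) :
    ∃ P, PerfectSet P ∧ ∀ m, ∃ q, EventuallyZero q ∧ ∃ G, IsOpen G ∧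
      (cTranslate P q ∩ G).Nonempty ∧ cTranslate P q ∩ G ⊆ Q m := by
  choose x hx using fun m => (hQ m).2
  choose q hq hcyl using fun m =>
    exists_eventuallyZero_cTranslate_cylinder (x m) (fun k => decide (k = m)) (m + 1)
  set R := fun m => cTranslate (Q m ∩ cylinder (x m) (m + 1)) (q m)
  have hRD : ∀ m, R m ⊆ firstTrueAt m := fun m =>
    (image_mono inter_subset_right).trans (hcyl m).subset
  have hR : ∀ m, PerfectSet (R m) := fun m =>
    PerfectSet.cTranslate
      ⟨(hQ m).1.inter_isClopen ⟨isClosed_cylinder _ _, isOpen_cylinder _ _ _⟩,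
        x m, hx m, self_mem_cylinder _ _⟩ _
  have hperf : PerfectSet (insert (fun _ => false) (⋃ m, R m)) :=
    ⟨⟨isClosed_insert_iUnion hRD fun m => (hR m).1.closed,
      preperfect_insert_iUnion hRD (fun m => (hR m).1.acc) fun m => (hR m).2⟩,
      insert_nonempty _ _⟩
  refine ⟨_, hperf, fun m => ⟨q m, hq m, cTranslate (firstTrueAt m) (q m),
    (isOpen_firstTrueAt m).cTranslate _, ?_⟩⟩
  rw [← cTranslate_inter, insert_iUnion_inter_firstTrueAt hRD, cTranslate_cTranslate]
  exact ⟨⟨x m, hx m, self_mem_cylinder _ _⟩, inter_subset_left⟩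

lemma not_meagerIn_of_inter_isOpen_subset {X : Type*} [TopologicalSpace X] [CompactSpace X]
    [T2Space X] {F K G : Set X} (hK : IsClosed K) (hG : IsOpen G) (hne : (K ∩ G).Nonempty)
    (hsub : K ∩ G ⊆ F) : ¬ MeagerIn F K := by
  have : CompactSpace K := isCompact_iff_compactSpace.1 hK.isCompact
  obtain ⟨y, hyK, hyG⟩ := hne
  exact fun hF => not_isMeagre_of_isOpen (hG.preimage continuous_subtype_val)
    ⟨⟨y, hyK⟩, hyG⟩ (hF.mono fun z hz => hsub ⟨z.2, hz⟩)

lemma meagerIn_of_forall_basis_inter_not_subset {X : Type*} [TopologicalSpace X]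
    {b : Set (Set X)} (hb : TopologicalSpace.IsTopologicalBasis b) {S P : Set X} (hS : IsClosed S)
    (h : ∀ U ∈ b, (U ∩ P).Nonempty → ¬ U ∩ P ⊆ S) : MeagerIn S P := by
  refine IsNowhereDense.isMeagre ((hS.preimage continuous_subtype_val).isNowhereDense_iff.2 ?_)
  refine eq_empty_of_forall_notMem fun z hz => ?_
  obtain ⟨O, hOS, hO, hzO⟩ := mem_interior.1 hz
  obtain ⟨V, hV, rfl⟩ := isOpen_induced_iff.1 hO
  obtain ⟨U, hUb, hzU, hUV⟩ := hb.exists_subset_of_mem_open hzO hV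
  exact h U hUb ⟨z, hzU, z.2⟩ fun y hy => hOS (show (⟨y, hy.2⟩ : P) ∈ _ from hUV hy.1)

lemma MeagerIn.iUnion {X ι : Type*} [TopologicalSpace X] [Countable ι] {S : ι → Set X}
    {P : Set X} (h : ∀ i, MeagerIn (S i) P) : MeagerIn (⋃ i, S i) P := by
  simpa only [MeagerIn, preimage_iUnion] using isMeagre_iUnion h

lemma exists_perfectSet_seq_eq_closure_inter {X : Type*} [TopologicalSpace X] {b : Set (Set X)}
    (hb : TopologicalSpace.IsTopologicalBasis b) (hbc : b.Countable) {P : ℕ → Set X}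
    (hP : ∀ n, PerfectSet (P n)) :
    ∃ Q : ℕ → Set X, (∀ m, PerfectSet (Q m)) ∧
      ∀ n, ∀ U ∈ b, (U ∩ P n).Nonempty → ∃ m, Q m = closure (U ∩ P n) := by
  let ι := {i : ℕ × Set X | i.2 ∈ b ∧ (i.2 ∩ P i.1).Nonempty}
  have : Countable ι :=
    ((countable_univ.prod hbc).mono fun i hi => mem_prod.2 ⟨mem_univ i.1, hi.1⟩).to_subtype
  have : Nonempty ι := by
    obtain ⟨x, hx⟩ := (hP 0).2
    obtain ⟨U, hU, hxU, -⟩ := hb.exists_subset_of_mem_open (mem_univ x) isOpen_univ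
    exact ⟨⟨(0, U), show _ ∧ _ from ⟨hU, x, hxU, hx⟩⟩⟩
  obtain ⟨e, he⟩ := exists_surjective_nat ι
  refine ⟨fun m => closure ((e m).1.2 ∩ P (e m).1.1), fun m => ?_, fun n U hU hne => ?_⟩
  · obtain ⟨x, hxU, hxP⟩ := (e m).2.2
    exact (hP _).1.closure_nhds_inter x hxP hxU (hb.isOpen (e m).2.1)
  · obtain ⟨m, hm⟩ := he ⟨(n, U), show _ ∧ _ from ⟨hU, hne⟩⟩
    exact ⟨m, by simp only [hm]⟩

theorem stmt17 (A : Set (ℕ → Bool)) :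
    CPM A ↔
      ∀ P : Set (ℕ → Bool), PerfectSet P →
        ∃ F : Set (ℕ → Bool), IsFsigma F ∧ A ⊆ F ∧
          ∀ q : ℕ → Bool, EventuallyZero q → MeagerIn F (cTranslate P q) := by
  refine ⟨fun hA P hP => hA.exists_isFsigma_meagerIn_cTranslate hP, fun h P hP => ?_⟩
  obtain ⟨b, hbc, -, hb⟩ := TopologicalSpace.exists_countable_basis (ℕ → Bool)
  obtain ⟨Q, hQ, hPQ⟩ := exists_perfectSet_seq_eq_closure_inter hb hbc hP
  obtain ⟨P', hP', hP'Q⟩ := exists_perfectSet_translate_inter_isOpen_subset Q hQ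
  obtain ⟨F, ⟨S, hS, rfl⟩, hAF, hF⟩ := h P' hP'
  refine ⟨⋃ j, S j, ⟨S, hS, rfl⟩, hAF, fun n => MeagerIn.iUnion fun j =>
    meagerIn_of_forall_basis_inter_not_subset hb (hS j) fun U hU hne hUS => ?_⟩
  obtain ⟨m, hm⟩ := hPQ n U hU hne
  obtain ⟨q, hq, G, hG, hGne, hGsub⟩ := hP'Q m
  have hGS : cTranslate P' q ∩ G ⊆ ⋃ j, S j :=
    hGsub.trans (hm ▸ (closure_minimal hUS (hS j)).trans (subset_iUnion S j))
  exact not_meagerIn_of_inter_isOpen_subset (hP'.cTranslate q).1.closed hG hGne hGS (hF q hq)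
end
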